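/- arXiv:1105.3921 — 3 statements merged into one kernel-verified Lean document; each statement's English description precedes it below -/
import Mathlib

section
/- For any edge {a,b} of a simple graph G, the two compositions LC(a)∘LC(b)∘LC(a) and LC(b)∘LC(a)∘LC(b) applied to G produce the same graph. -/
/-- Local complementation of a simple graph at a vertex `a`: every edge between
two (distinct) neighbors of `a` is toggled; all other adjacencies (including
those of `a` itself) are unchanged. -/
def lc {V : Type*} (G : SimpleGraph V) (a : V) : SimpleGraph V where
  Adj b c := b ≠ c ∧ Xor' (G.Adj b c) (G.Adj a b ∧ G.Adj a c)
  symm := by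
    constructor
    intro b c h
    obtain ⟨hne, hx⟩ := h
    refine ⟨hne.symm, ?_⟩
    rw [G.adj_comm c b, and_comm]
    exact hx
  loopless := by
    constructor
    intro b h
    exact h.1 rfl

/-!
Both sides equal the pivot of `G` along `ab`. Write `A x`, `B x` for the adjacency of `x` to `a`,
`b`, read in `ZMod 2`. Along `LC(a)`, `LC(b)`, `LC(a)` the neighbourhoods of `a` and `b` evolve as
`(A, A + B)`, `(B, A + B)`, `(B, A)` (up to exchanging the vertices `a` and `b` themselves), so they
end up swapped. Off `{a, b}` the three toggles `A x A y`, `(A + B) x (A + B) y` and `B x B y` add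
up to `A x B y + B x A y`, which is symmetric in `a` and `b`.
-/

theorem SimpleGraph.ext_of_adj_mem_of_adj_compl {V : Type*} {G H : SimpleGraph V}
    (s : Set V) (hs : ∀ v ∈ s, ∀ y, G.Adj v y ↔ H.Adj v y)
    (hsc : ∀ x ∉ s, ∀ y ∉ s, G.Adj x y ↔ H.Adj x y) : G = H := by
  ext x y
  by_cases hx : x ∈ s
  · exact hs x hx y
  by_cases hy : y ∈ s
  · rw [G.adj_comm, H.adj_comm]
    exact hs y hy x
  · exact hsc x hx y hy

section

variable {V : Type*} {G : SimpleGraph V} {a b x y : V}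

@[simp]
theorem lc_adj : (lc G a).Adj x y ↔ x ≠ y ∧ Xor (G.Adj x y) (G.Adj a x ∧ G.Adj a y) := Iff.rfl

theorem lc_adj_self : (lc G a).Adj a y ↔ G.Adj a y := by
  have : G.Adj a y → a ≠ y := G.ne_of_adj
  grind [lc_adj, G.irrefl]

theorem lc_adj_of_adj (hab : G.Adj a b) :
    (lc G a).Adj b y ↔ b ≠ y ∧ Xor (G.Adj b y) (G.Adj a y) := by
  simp [hab]

theorem lc_lc_adj_right (hab : G.Adj a b) :
    (lc (lc G a) b).Adj b y ↔ b ≠ y ∧ Xor (G.Adj b y) (G.Adj a y) := by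
  rw [lc_adj_self, lc_adj_of_adj hab]

variable [DecidableEq V]

/-- The pivot (edge local complementation) of `G` along `ab`. Off `{a, b}`, the `Xor` term holds
exactly when `x` and `y` lie in two different classes among `N(a) \ N(b)`, `N(b) \ N(a)` and
`N(a) ∩ N(b)`. -/
def pivot (G : SimpleGraph V) (a b : V) : SimpleGraph V where
  Adj x y := x ≠ y ∧ Xor (G.Adj (Equiv.swap a b x) (Equiv.swap a b y))
    (x ≠ a ∧ x ≠ b ∧ y ≠ a ∧ y ≠ b ∧ Xor (G.Adj a x ∧ G.Adj b y) (G.Adj b x ∧ G.Adj a y))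
  symm := ⟨fun x y ⟨hne, h⟩ => ⟨hne.symm, by grind [G.adj_comm]⟩⟩
  loopless := ⟨fun _ h => h.1 rfl⟩

theorem pivot_comm : pivot G a b = pivot G b a := by
  ext x y
  simp only [pivot, Equiv.swap_comm a b]
  grind

theorem pivot_adj_left : (pivot G a b).Adj a y ↔ G.Adj b (Equiv.swap a b y) := by
  have : G.Adj b (Equiv.swap a b y) → b ≠ Equiv.swap a b y := G.ne_of_adj
  simp only [pivot]
  grind [G.irrefl]

theorem pivot_adj_of_ne (hxa : x ≠ a) (hxb : x ≠ b) (hya : y ≠ a) (hyb : y ≠ b) :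
    (pivot G a b).Adj x y ↔
      x ≠ y ∧ Xor (G.Adj x y) (Xor (G.Adj a x ∧ G.Adj b y) (G.Adj b x ∧ G.Adj a y)) := by
  simp [pivot, Equiv.swap_apply_of_ne_of_ne, *]

theorem lc_lc_adj_left (hab : G.Adj a b) :
    (lc (lc G a) b).Adj a y ↔ G.Adj b (Equiv.swap a b y) := by
  have hba : (lc G a).Adj b a := (lc_adj_of_adj hab).2 ⟨hab.ne.symm, by simp [hab.symm]⟩
  rw [lc_adj_of_adj hba, lc_adj_self, lc_adj_of_adj hab]
  have : G.Adj b y → b ≠ y := G.ne_of_adj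
  grind [G.irrefl, G.adj_comm]

theorem lc_lc_lc_adj_left (hab : G.Adj a b) :
    (lc (lc (lc G a) b) a).Adj a y ↔ G.Adj b (Equiv.swap a b y) := by
  rw [lc_adj_self, lc_lc_adj_left hab]

theorem lc_lc_lc_adj_right (hab : G.Adj a b) :
    (lc (lc (lc G a) b) a).Adj b y ↔ G.Adj a (Equiv.swap a b y) := by
  have hab' : (lc (lc G a) b).Adj a b := (lc_lc_adj_left hab).2 (by simpa using hab.symm)
  rw [lc_adj_of_adj hab', lc_lc_adj_right hab, lc_lc_adj_left hab]
  have : G.Adj a y → a ≠ y := G.ne_of_adj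
  grind [G.irrefl, G.adj_comm]

theorem lc_lc_lc_adj_of_ne (hab : G.Adj a b) (hxa : x ≠ a) (hxb : x ≠ b) (hya : y ≠ a)
    (hyb : y ≠ b) : (lc (lc (lc G a) b) a).Adj x y ↔
      x ≠ y ∧ Xor (G.Adj x y) (Xor (G.Adj a x ∧ G.Adj b y) (G.Adj b x ∧ G.Adj a y)) := by
  rw [lc_adj, lc_lc_adj_left hab, lc_lc_adj_left hab, Equiv.swap_apply_of_ne_of_ne hxa hxb,
    Equiv.swap_apply_of_ne_of_ne hya hyb, lc_adj, lc_adj_of_adj hab, lc_adj_of_adj hab, lc_adj]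
  grind

theorem lc_lc_lc_eq_pivot (hab : G.Adj a b) : lc (lc (lc G a) b) a = pivot G a b := by
  refine SimpleGraph.ext_of_adj_mem_of_adj_compl {a, b} ?_ ?_
  · rintro v (rfl | rfl) y
    · rw [lc_lc_lc_adj_left hab, pivot_adj_left]
    · rw [lc_lc_lc_adj_right hab, pivot_comm, pivot_adj_left, Equiv.swap_comm]
  · intro x hx y hy
    simp only [Set.mem_insert_iff, Set.mem_singleton_iff, not_or] at hx hy
    rw [lc_lc_lc_adj_of_ne hab hx.1 hx.2 hy.1 hy.2, pivot_adj_of_ne hx.1 hx.2 hy.1 hy.2]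

end

/-- for any edge `{a,b}` of `G`, the compositions
`LC(a)∘LC(b)∘LC(a)` and `LC(b)∘LC(a)∘LC(b)` produce the same graph. -/
theorem elc_well_defined {V : Type*} (G : SimpleGraph V) (a b : V)
    (hab : G.Adj a b) :
    lc (lc (lc G a) b) a = lc (lc (lc G b) a) b := by
  classical
  rw [lc_lc_lc_eq_pivot hab, lc_lc_lc_eq_pivot hab.symm, pivot_comm]
end

section
/- ELC(a,b) is an involution on graphs containing the edge {a,b}: applying edge local complementation on {a,b} twice returns the original graph. -/
/-- Edge local complementation on the edge `{a,b}`. -/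
def elc {V : Type*} (G : SimpleGraph V) (a b : V) : SimpleGraph V :=
  lc (lc (lc G a) b) a

/-!
Local complementation at `v` does not change the neighbourhood of `v`, so applying it twice
toggles the same pairs twice: `lc · v` is an involution. Hence the palindrome
`ELC(a,b) = LC(a) ∘ LC(b) ∘ LC(a)` is an involution as well. The edge `{a,b}`
survives each of the three steps because it is incident to the vertex being complemented.
-/

section LocalComplementation

variable {V : Type*} (G : SimpleGraph V)

theorem lc_adj_iff (v x y : V) :
    (lc G v).Adj x y ↔ x ≠ y ∧ Xor (G.Adj x y) (G.Adj v x ∧ G.Adj v y) :=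
  Iff.rfl

theorem lc_adj_left_iff (v x : V) : (lc G v).Adj v x ↔ G.Adj v x := by
  simp only [lc_adj_iff, G.irrefl, false_and, xor_comm _ False, xor_false, id]
  exact and_iff_right_of_imp G.ne_of_adj

theorem lc_lc (v : V) : lc (lc G v) v = G := by
  ext x y
  simp only [lc_adj_iff (lc G v), lc_adj_left_iff, lc_adj_iff G, xor_def]
  have hne : G.Adj x y → x ≠ y := G.ne_of_adj
  tauto

theorem elc_adj_iff (a b : V) : (elc G a b).Adj a b ↔ G.Adj a b := by
  rw [elc, lc_adj_left_iff, SimpleGraph.adj_comm, lc_adj_left_iff, SimpleGraph.adj_comm,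
    lc_adj_left_iff]

theorem elc_elc (a b : V) : elc (elc G a b) a b = G := by
  simp only [elc, lc_lc]

end LocalComplementation

/-- edge local complementation is an involution on graphs
containing the edge `{a,b}` (which remains an edge after `ELC(a,b)`). -/
theorem elc_involution {V : Type*} (G : SimpleGraph V) (a b : V)
    (hab : G.Adj a b) :
    (elc G a b).Adj a b ∧ elc (elc G a b) a b = G :=
  ⟨(elc_adj_iff G a b).mpr hab, elc_elc G a b⟩
end

section
/- Let A and B be two registers of 5 qubits each, with core qubits a₁ ∈ A and b₁ ∈ B. Starting from |+⟩^{⊗10}, apply CZ_{a₁,b₁}, then the star entangling operations ∏_{i=2}^5 CZ_{a₁,a_i} ∏_{j=2}^5 CZ_{b₁,b_j}, then Hadamards H_{a₁} ⊗ H_{b₁}. The resulting state equals (1/2)[|+⟩_A^{⊗5}(|+⟩_B^{⊗5} + |−⟩_B^{⊗5}) + |−⟩_A^{⊗5}(|+⟩_B^{⊗5} − |−⟩_B^{⊗5})], the classically encoded two-qubit cluster state. -/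
open Matrix Sum

noncomputable section

/-- The controlled-phase gate acting on qubits `p` and `q` (identity on all
other qubits): it multiplies `|x⟩` by `(−1)^{x_p x_q}`. -/
def czGate {V : Type*} [Fintype V] [DecidableEq V] (i j : V) :
    Matrix (V → Fin 2) (V → Fin 2) ℂ :=
  Matrix.diagonal fun x => (-1 : ℂ) ^ ((x i).val * (x j).val)

/-- The state |+⟩^{⊗N}. -/
def plusAll (V : Type*) [Fintype V] : (V → Fin 2) → ℂ :=
  fun _ => ((1 / Real.sqrt 2 : ℝ) : ℂ) ^ (Fintype.card V)

/-- The Hadamard gate acting on qubit `a` (identity on the other qubits). -/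
def hGate {V : Type*} [Fintype V] [DecidableEq V] (a : V) :
    Matrix (V → Fin 2) (V → Fin 2) ℂ :=
  fun x y => if ∀ i, i ≠ a → x i = y i
    then ((1 / Real.sqrt 2 : ℝ) : ℂ) * (-1) ^ ((x a).val * (y a).val)
    else 0

/-- The amplitude function of `|+⟩` (as a function of one bit). -/
def plusAmp : Fin 2 → ℂ := fun _ => ((1 / Real.sqrt 2 : ℝ) : ℂ)

/-- The amplitude function of `|−⟩`. -/
def minusAmp : Fin 2 → ℂ := fun t => ((1 / Real.sqrt 2 : ℝ) : ℂ) * (-1) ^ t.val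

/-- Register `A` is `Sum.inl`, register `B` is `Sum.inr`;
core qubits are `a₁ = inl 0`, `b₁ = inr 0`. -/
abbrev TenQ := (Fin 5 ⊕ Fin 5) → Fin 2

/-- `H_a` applied to a state, written as a sum over the two values of bit `a`. -/
lemma hGate_mulVec {V : Type*} [Fintype V] [DecidableEq V] (a : V)
    (v : (V → Fin 2) → ℂ) (x : V → Fin 2) :
    (hGate a).mulVec v x =
      ∑ s : Fin 2, (((1 / Real.sqrt 2 : ℝ) : ℂ) * (-1) ^ ((x a).val * s.val))
        * v (Function.update x a s) := by
  classical
  simp only [Matrix.mulVec, dotProduct, hGate]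
  rw [← Equiv.sum_comp (Equiv.funSplitAt a (Fin 2)).symm, Fintype.sum_prod_type]
  refine Finset.sum_congr rfl fun s _ => ?_
  rw [Finset.sum_eq_single (fun j : {j // j ≠ a} => x j.1)]
  · have h1 : (Equiv.funSplitAt a (Fin 2)).symm (s, fun j : {j // j ≠ a} => x j.1)
        = Function.update x a s := by
      funext j
      by_cases h : j = a <;>
        simp [Equiv.funSplitAt_symm_apply, Function.update_apply, h]
    rw [h1]
    rw [if_pos]
    · simp
    · intro i hi; simp [Function.update_apply, hi]
  · intro t _ ht
    rw [if_neg, zero_mul]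
    intro hcond
    apply ht
    funext j
    have := hcond j.1 j.2
    simpa [Equiv.funSplitAt_symm_apply, j.2] using this.symm
  · intro h; exact absurd (Finset.mem_univ _) h

/-- starting from `|+⟩^{⊗10}`, applying `CZ_{a₁,b₁}`, then the
star operations `∏_{i=2}^5 CZ_{a₁,a_i} ∏_{j=2}^5 CZ_{b₁,b_j}`, then
`H_{a₁} ⊗ H_{b₁}`, yields
`(1/2)[|+⟩_A^{⊗5}(|+⟩_B^{⊗5} + |−⟩_B^{⊗5}) + |−⟩_A^{⊗5}(|+⟩_B^{⊗5} − |−⟩_B^{⊗5})]`. -/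
theorem classically_encoded_two_qubit_cluster :
    (hGate (inl 0 : Fin 5 ⊕ Fin 5) * hGate (inr 0 : Fin 5 ⊕ Fin 5)).mulVec
      ((czGate (inl 0 : Fin 5 ⊕ Fin 5) (inl 1) * czGate (inl 0 : Fin 5 ⊕ Fin 5) (inl 2) *
        czGate (inl 0 : Fin 5 ⊕ Fin 5) (inl 3) * czGate (inl 0 : Fin 5 ⊕ Fin 5) (inl 4) *
        czGate (inr 0 : Fin 5 ⊕ Fin 5) (inr 1) * czGate (inr 0 : Fin 5 ⊕ Fin 5) (inr 2) *
        czGate (inr 0 : Fin 5 ⊕ Fin 5) (inr 3) * czGate (inr 0 : Fin 5 ⊕ Fin 5) (inr 4)).mulVec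
        ((czGate (inl 0 : Fin 5 ⊕ Fin 5) (inr 0)).mulVec (plusAll (Fin 5 ⊕ Fin 5))))
      = fun x : TenQ => (1 / 2 : ℂ) *
          ((∏ i : Fin 5, plusAmp (x (inl i))) *
              ((∏ j : Fin 5, plusAmp (x (inr j))) + ∏ j : Fin 5, minusAmp (x (inr j)))
            + (∏ i : Fin 5, minusAmp (x (inl i))) *
              ((∏ j : Fin 5, plusAmp (x (inr j))) - ∏ j : Fin 5, minusAmp (x (inr j)))) := by
  funext x
  simp only [← Matrix.mulVec_mulVec]
  simp only [hGate_mulVec, czGate, Matrix.mulVec_diagonal, plusAll, plusAmp, minusAmp,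
    Fin.sum_univ_two, Fin.prod_univ_five, Function.update_apply]
  simp
  have hr : ((Real.sqrt 2 : ℝ) : ℂ)⁻¹ * ((Real.sqrt 2 : ℝ) : ℂ)⁻¹ = 1/2 := by
    rw [← mul_inv, ← Complex.ofReal_mul, Real.mul_self_sqrt (by norm_num)]
    norm_num
  simp only [← inv_pow]
  linear_combination (((Real.sqrt 2 : ℝ) : ℂ)⁻¹ ^ 10 *
    (1 + ((-1:ℂ)^(x (Sum.inr 0)).val * (-1:ℂ)^(x (Sum.inr 1)).val * (-1:ℂ)^(x (Sum.inr 2)).val *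
          (-1:ℂ)^(x (Sum.inr 3)).val * (-1:ℂ)^(x (Sum.inr 4)).val)
       + ((-1:ℂ)^(x (Sum.inl 0)).val * (-1:ℂ)^(x (Sum.inl 1)).val * (-1:ℂ)^(x (Sum.inl 2)).val *
          (-1:ℂ)^(x (Sum.inl 3)).val * (-1:ℂ)^(x (Sum.inl 4)).val)
       - ((-1:ℂ)^(x (Sum.inl 0)).val * (-1:ℂ)^(x (Sum.inl 1)).val * (-1:ℂ)^(x (Sum.inl 2)).val *
          (-1:ℂ)^(x (Sum.inl 3)).val * (-1:ℂ)^(x (Sum.inl 4)).val) *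
         ((-1:ℂ)^(x (Sum.inr 0)).val * (-1:ℂ)^(x (Sum.inr 1)).val * (-1:ℂ)^(x (Sum.inr 2)).val *
          (-1:ℂ)^(x (Sum.inr 3)).val * (-1:ℂ)^(x (Sum.inr 4)).val))) * hr
end
end
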